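/- Let k > 1, suppose there are more than k schools, all schools have a common priority order, and the set of students is partitioned into sincere students N and sophisticated students M. In equilibrium, SD^k is more fair by stability than β^k: for every such problem (P,≻,q), if a Nash equilibrium of the game (β^k, P) has an outcome that is stable at (P,≻,q), then the (unique) Nash equilibrium outcome SD(P^k_N, P_M, ≻, q) of the game (SD^k, P) is stable at (P,≻,q); moreover, there exists such a problem where the Nash equilibrium outcome of (SD^k, P) is stable at (P,≻,q) but some Nash equilibrium outcome of (β^k, P) is not. -/

import Mathlib

/-!
School choice framework following Bonkoungou–Nesterov,
"Reforms meet fairness concerns in school and college admissions".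

Students `I` and schools `S` are finite types with `|I| > |S|`.
A strict preference relation of a student over `S ∪ {∅}` is represented by a list
of `Option S` containing every element exactly once (earlier = more preferred);
`none` is the outside option.  A strict priority order of a school is a list of
`I` containing every student exactly once (earlier = higher priority).
-/

namespace SchoolChoice

variable {I S : Type*} [Fintype I] [DecidableEq I] [Fintype S] [DecidableEq S]

/-- `p` is a strict preference relation on `S ∪ {∅}`: a ranking list containing every
element of `Option S` exactly once. -/
def ValidPref (p : List (Option S)) : Prop := p.Nodup ∧ ∀ x : Option S, x ∈ p

/-- `pr` is a strict priority order: a ranking list containing every student exactly once. -/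
def ValidPrio (pr : List I) : Prop := pr.Nodup ∧ ∀ i : I, i ∈ pr

/-- `a` is strictly preferred to `b` under the preference relation `p`. -/
def prefLt (p : List (Option S)) (a b : Option S) : Prop := p.idxOf a < p.idxOf b

/-- `i` has strictly higher priority than `j` under the priority order `pr`. -/
def prioLt (pr : List I) (i j : I) : Prop := pr.idxOf i < pr.idxOf j

instance (p : List (Option S)) (a b : Option S) : Decidable (prefLt p a b) :=
  inferInstanceAs (Decidable (_ < _))

instance (pr : List I) (i j : I) : Decidable (prioLt pr i j) :=
  inferInstanceAs (Decidable (_ < _))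

/-- The acceptable schools of `p` (those preferred to the outside option), in preference
order. -/
def acceptables (p : List (Option S)) : List S := (p.takeWhile Option.isSome).filterMap id

/-- The truncation of `p` after its `k`-th acceptable school: the preference relation
listing, in the same order, only the `min k _` most-preferred acceptable schools of `p`,
all other schools being unacceptable (kept below `none` in their original order). -/
def truncate (p : List (Option S)) (k : ℕ) : List (Option S) :=
  ((acceptables p).take k).map some ++
    none :: p.filter (fun x => decide (x ≠ none ∧ x ∉ ((acceptables p).take k).map some))

/-- `μ` is a matching: it respects the capacities `q`. -/
def IsMatching (q : S → ℕ) (μ : I → Option S) : Prop :=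
  ∀ s : S, (Finset.univ.filter (fun i => μ i = some s)).card ≤ q s

/-- The pair `(i, s)` blocks `μ` under the problem `(P, prio, q)`. -/
def Blocks (P : I → List (Option S)) (prio : S → List I) (q : S → ℕ)
    (μ : I → Option S) (i : I) (s : S) : Prop :=
  prefLt (P i) (some s) (μ i) ∧
    ((Finset.univ.filter (fun j => μ j = some s)).card < q s ∨
      ∃ j : I, μ j = some s ∧ prioLt (prio s) i j)

/-- `i` is a blocking student for `μ` under `(P, prio, q)`. -/
def BlockingStudent (P : I → List (Option S)) (prio : S → List I) (q : S → ℕ)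
    (μ : I → Option S) (i : I) : Prop :=
  ∃ s : S, Blocks P prio q μ i s

/-- `μ` is individually rational under `P`. -/
def IndividuallyRational (P : I → List (Option S)) (μ : I → Option S) : Prop :=
  ∀ i : I, ¬ prefLt (P i) none (μ i)

/-- `μ` is stable at `(P, prio, q)`. -/
def IsStable (P : I → List (Option S)) (prio : S → List I) (q : S → ℕ)
    (μ : I → Option S) : Prop :=
  IndividuallyRational P μ ∧ ∀ i : I, ¬ BlockingStudent P prio q μ i

/-- The number of blocking students for `μ` under `(P, prio, q)`. -/
noncomputable def numBlocking (P : I → List (Option S)) (prio : S → List I) (q : S → ℕ)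
    (μ : I → Option S) : ℕ :=
  {i : I | BlockingStudent P prio q μ i}.ncard

/-! ### The Gale–Shapley student-proposing deferred acceptance mechanism

The state `σ : I → ℕ` records, for each student, how many of her acceptable schools
have already rejected her; she currently applies to the `σ i`-th school on her list
(if any).  At each round every school tentatively keeps the `q s` highest-priority
students among its current applicants and rejects the rest, who move on. -/

/-- The school student `i` currently applies to. -/
def daTarget (P : I → List (Option S)) (σ : I → ℕ) (i : I) : Option S :=
  (acceptables (P i))[σ i]?

/-- The students tentatively held by school `s`: the `q s` highest-priority current
applicants. -/
def daHeld (P : I → List (Option S)) (prio : S → List I) (q : S → ℕ)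
    (σ : I → ℕ) (s : S) : List I :=
  ((prio s).filter (fun i => decide (daTarget P σ i = some s))).take (q s)

/-- One round of deferred acceptance: every rejected student moves to her next choice. -/
def daStep (P : I → List (Option S)) (prio : S → List I) (q : S → ℕ)
    (σ : I → ℕ) : I → ℕ := fun i =>
  match daTarget P σ i with
  | none => σ i
  | some s => if i ∈ daHeld P prio q σ s then σ i else σ i + 1

/-- The Gale–Shapley (student-proposing deferred acceptance) mechanism.  Iterating the
round map `|I| * |S| + 1` times is guaranteed to reach the terminal state. -/
def GS (P : I → List (Option S)) (prio : S → List I) (q : S → ℕ) : I → Option S :=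
  fun i =>
    let σ := (daStep P prio q)^[Fintype.card I * Fintype.card S + 1] (fun _ => 0)
    match daTarget P σ i with
    | none => none
    | some s => if i ∈ daHeld P prio q σ s then some s else none

/-- The constrained Gale–Shapley mechanism `GS^k`. -/
def GSk (k : ℕ) (P : I → List (Option S)) (prio : S → List I) (q : S → ℕ) : I → Option S :=
  GS (fun i => truncate (P i) k) prio q

/-! ### The Boston (immediate acceptance) mechanism -/

/-- Round `t` of the Boston mechanism: each not-yet-accepted student applies to her
`t`-th ranked acceptable school (0-indexed), and each school permanently accepts, up to
its remaining capacity, its highest-priority new applicants. -/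
def bostonRound (P : I → List (Option S)) (prio : S → List I) (q : S → ℕ)
    (μ : I → Option S) (t : ℕ) : I → Option S := fun i =>
  match μ i with
  | some s => some s
  | none =>
    match (acceptables (P i))[t]? with
    | none => none
    | some s =>
      if i ∈ ((prio s).filter
            (fun j => decide (μ j = none ∧ (acceptables (P j))[t]? = some s))).take
          (q s - (Finset.univ.filter (fun j => μ j = some s)).card)
      then some s else none

/-- The Boston (immediate acceptance) mechanism. -/
def Boston (P : I → List (Option S)) (prio : S → List I) (q : S → ℕ) : I → Option S :=
  (List.range (Fintype.card S)).foldl (bostonRound P prio q) (fun _ => none)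

/-- The constrained Boston mechanism `β^k`. -/
def Bostonk (k : ℕ) (P : I → List (Option S)) (prio : S → List I) (q : S → ℕ) :
    I → Option S :=
  Boston (fun i => truncate (P i) k) prio q

/-! ### The first-preference-first mechanism -/

/-- The adjusted priority profile: each first-preference-first school (member of `fpf`)
ranks students first by the rank they assign to it under `P` (counting the ranking of the
outside option as well), ties broken by the original priority; equal-preference schools
keep their original priority. -/
def fpfPrio (fpf : Finset S) (P : I → List (Option S)) (prio : S → List I) : S → List I :=
  fun s =>
    if s ∈ fpf then
      (List.range (Fintype.card S + 1)).flatMap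
        (fun r => (prio s).filter (fun i => decide ((P i).idxOf (some s) = r)))
    else prio s

/-- The first-preference-first mechanism with set `fpf` of first-preference-first
schools: Gale–Shapley run on the adjusted priorities. -/
def FPF (fpf : Finset S) (P : I → List (Option S)) (prio : S → List I) (q : S → ℕ) :
    I → Option S :=
  GS P (fpfPrio fpf P prio) q

/-- The constrained first-preference-first mechanism `FPF^k`. -/
def FPFk (fpf : Finset S) (k : ℕ) (P : I → List (Option S)) (prio : S → List I)
    (q : S → ℕ) : I → Option S :=
  FPF fpf (fun i => truncate (P i) k) prio q

/-! ### Manipulation and equilibrium notions -/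

/-- Student `i` is a manipulating student of the mechanism `φ` (with priorities and
capacities fixed) at the true profile `P`. -/
def ManipulatingStudent (φ : (I → List (Option S)) → I → Option S)
    (P : I → List (Option S)) (i : I) : Prop :=
  ∃ Q : List (Option S), ValidPref Q ∧
    prefLt (P i) (φ (Function.update P i Q) i) (φ P i)

/-- The mechanism `φ` is not manipulable at `P`. -/
def NotManipulable (φ : (I → List (Option S)) → I → Option S)
    (P : I → List (Option S)) : Prop :=
  ∀ i : I, ¬ ManipulatingStudent φ P i

/-- `P'` is a Nash equilibrium of the game `(φ, P)` in which the sophisticated students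
are the members of `M` (who may misreport, and best respond) and all other (sincere)
students report truthfully. -/
def NashEq (φ : (I → List (Option S)) → I → Option S) (P : I → List (Option S))
    (M : Finset I) (P' : I → List (Option S)) : Prop :=
  (∀ i, ValidPref (P' i)) ∧ (∀ i ∉ M, P' i = P i) ∧
    ∀ i ∈ M, ∀ Q : List (Option S), ValidPref Q →
      ¬ prefLt (P i) (φ (Function.update P' i Q) i) (φ P' i)

/-! ### Semi-sophisticated students -/

/-- Student `i` is guaranteed her first choice `s`: `s` is her most-preferred acceptable
school and `i` is among the `q s` highest-priority students at `s`. -/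
def GuaranteedFirstChoice (P : I → List (Option S)) (prio : S → List I) (q : S → ℕ)
    (i : I) (s : S) : Prop :=
  (acceptables (P i)).head? = some s ∧ (prio s).idxOf i < q s

instance (P : I → List (Option S)) (prio : S → List I) (q : S → ℕ) (i : I) (s : S) :
    Decidable (GuaranteedFirstChoice P prio q i s) :=
  inferInstanceAs (Decidable (_ ∧ _))

/-- School `s` is competitive: at least `q s` students are guaranteed their first
choice `s`. -/
def Competitive (P : I → List (Option S)) (prio : S → List I) (q : S → ℕ) (s : S) : Prop :=
  q s ≤ (Finset.univ.filter (fun i => GuaranteedFirstChoice P prio q i s)).card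

instance (P : I → List (Option S)) (prio : S → List I) (q : S → ℕ) (s : S) :
    Decidable (Competitive P prio q s) :=
  inferInstanceAs (Decidable (_ ≤ _))

/-- `P'` is a Nash equilibrium of the game `(GS^ℓ, P)` with semi-sophisticated students:
every student guaranteed her first choice reports truthfully; every other student reports
truthfully if she has at most `ℓ` acceptable schools or all her acceptable schools are
competitive, and otherwise lists as acceptable, in the order given by her true preference,
only her acceptable schools that are not competitive. -/
def SemiSophProfile (ℓ : ℕ) (P : I → List (Option S)) (prio : S → List I) (q : S → ℕ)
    (P' : I → List (Option S)) : Prop :=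
  ∀ i : I,
    ((∃ s : S, GuaranteedFirstChoice P prio q i s) → P' i = P i) ∧
    (¬ (∃ s : S, GuaranteedFirstChoice P prio q i s) →
      (((acceptables (P i)).length ≤ ℓ ∨ ∀ s ∈ acceptables (P i), Competitive P prio q s) →
          P' i = P i) ∧
      (¬ ((acceptables (P i)).length ≤ ℓ ∨
            ∀ s ∈ acceptables (P i), Competitive P prio q s) →
          acceptables (P' i) =
            (acceptables (P i)).filter (fun s => decide (¬ Competitive P prio q s))))


end SchoolChoice

/-!
Under a common priority order there is exactly one stable matching: by induction along the
priority order, two stable matchings agree on every student, since a student served worse by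
one of them would block it together with the school the other one gives her. If a Nash
equilibrium of `β^k` has an outcome `ν` stable at `P`, then `ν` gives every sincere student one
of the `k` schools she lists, so `ν` is also stable for the reported profile `(P^k_N, P_M)`, and
uniqueness identifies `ν` with `SD(P^k_N, P_M)`.

For the strict part let `a ≻ b ≻ c` head the priority order, let two schools `s₁, s₂` have one
seat each, let `a, b` list `s₁, s₂` and `c` list `s₂, s₁`. Truncating after `k ≥ 2` schools
changes nothing, so `SD^k` gives the stable outcome, while under `β^k` student `b` loses `s₁` to
`a` in the first round and finds `s₂` taken by `c`, whom she outranks.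
-/

namespace List

variable {α : Type*}

theorem Nodup.pairwise_idxOf_lt [BEq α] [LawfulBEq α] {l : List α} (h : l.Nodup) :
    l.Pairwise (fun a b => l.idxOf a < l.idxOf b) := by
  rw [pairwise_iff_getElem]
  intro i j hi hj hij
  rwa [h.idxOf_getElem, h.idxOf_getElem]

theorem forall_mem_take_of_le_length_filter {l : List α} {p : α → Bool} {n : ℕ}
    (hl : l.Pairwise (fun a b => p b = true → p a = true)) (hn : n ≤ (l.filter p).length) :
    ∀ x ∈ l.take n, p x = true := by
  induction l generalizing n with
  | nil => simp
  | cons y t ih =>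
    obtain _ | n := n
    · simp
    intro x hx
    rw [take_succ_cons] at hx
    by_cases hy : p y = true
    · rcases mem_cons.1 hx with rfl | hx
      · exact hy
      · refine ih (pairwise_cons.1 hl).2 ?_ x hx
        simpa [filter_cons_of_pos hy] using hn
    · have hnil : t.filter p = [] :=
        filter_eq_nil_iff.2 fun b hb hpb => hy ((pairwise_cons.1 hl).1 b hb hpb)
      simp [filter_cons_of_neg hy, hnil] at hn

theorem mem_take_filter_of_forall_idxOf_lt [BEq α] [LawfulBEq α] {l : List α} {p : α → Bool}
    {a : α} {n : ℕ} (ha : a ∈ l) (hpa : p a = true)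
    (hfirst : ∀ b ∈ l, l.idxOf b < l.idxOf a → p b = false) (hn : 0 < n) :
    a ∈ (l.filter p).take n := by
  induction l with
  | nil => simp at ha
  | cons x t ih =>
    by_cases hxa : x = a
    · subst hxa
      obtain ⟨n, rfl⟩ := Nat.exists_eq_succ_of_ne_zero hn.ne'
      simp [filter_cons_of_pos hpa]
    have hpx : p x = false := hfirst x mem_cons_self (by simp [idxOf_cons_ne _ hxa])
    rw [filter_cons_of_neg (by simp [hpx])]
    refine ih ((mem_cons.1 ha).resolve_left (Ne.symm hxa)) fun b hb hlt => ?_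
    by_cases hbx : x = b
    · exact hbx ▸ hpx
    · exact hfirst b (mem_cons_of_mem _ hb) (by simpa [idxOf_cons_ne _ hbx, idxOf_cons_ne _ hxa])

end List

namespace SchoolChoice

section Preferences

variable {S : Type*}

theorem acceptables_map_some_append_none (l : List S) (r : List (Option S)) :
    acceptables (l.map some ++ none :: r) = l := by
  simp [acceptables]

theorem exists_eq_map_some_acceptables_append {p : List (Option S)} (h : none ∈ p) :
    ∃ r, p = (acceptables p).map some ++ none :: r := by
  induction p with
  | nil => simp at h
  | cons x t ih =>
    cases x with
    | none => exact ⟨t, by simp [acceptables]⟩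
    | some s =>
      obtain ⟨r, hr⟩ := ih (by simpa using h)
      refine ⟨r, ?_⟩
      conv_lhs => rw [hr]
      simp [acceptables]

theorem ValidPref.eq_map_some_acceptables_append {p : List (Option S)} (hv : ValidPref p) :
    ∃ r, p = (acceptables p).map some ++ none :: r :=
  exists_eq_map_some_acceptables_append (hv.2 none)

theorem ValidPref.nodup_acceptables {p : List (Option S)} (hv : ValidPref p) :
    (acceptables p).Nodup := by
  obtain ⟨r, hr⟩ := hv.eq_map_some_acceptables_append
  have hnd := hv.1
  rw [hr] at hnd
  exact (List.nodup_append.1 hnd).1.of_map _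

variable [DecidableEq S]

theorem not_prefLt_self (p : List (Option S)) (a : Option S) : ¬ prefLt p a a :=
  lt_irrefl _

theorem acceptables_truncate (p : List (Option S)) (k : ℕ) :
    acceptables (truncate p k) = (acceptables p).take k :=
  acceptables_map_some_append_none _ _

theorem validPref_truncate {p : List (Option S)} (hv : ValidPref p) (k : ℕ) :
    ValidPref (truncate p k) := by
  constructor
  · refine List.Nodup.append ?_ ?_ ?_
    · exact (hv.nodup_acceptables.sublist (List.take_sublist _ _)).map (Option.some_injective S)
    · exact List.nodup_cons.2 ⟨by simp, hv.1.sublist List.filter_sublist⟩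
    · intro x hx hy
      rcases List.mem_cons.1 hy with rfl | hy
      · obtain ⟨_, -, h⟩ := List.mem_map.1 hx
        exact Option.some_ne_none _ h
      · exact (by simpa using List.of_mem_filter hy : x ≠ none ∧ x ∉ _).2 hx
  · intro x
    by_cases hx : x ∈ ((acceptables p).take k).map some
    · exact List.mem_append_left _ hx
    · refine List.mem_append_right _ ?_
      rcases eq_or_ne x none with rfl | hne
      · exact List.mem_cons_self
      · exact List.mem_cons_of_mem _ (List.mem_filter.2 ⟨hv.2 x, decide_eq_true ⟨hne, hx⟩⟩)

namespace ValidPref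

variable {p : List (Option S)}

theorem idxOf_none (hv : ValidPref p) : p.idxOf none = (acceptables p).length := by
  obtain ⟨r, hr⟩ := hv.eq_map_some_acceptables_append
  conv_lhs => rw [hr]
  rw [List.idxOf_append_of_notMem (by simp), List.idxOf_cons_self]
  simp

theorem idxOf_some_of_mem (hv : ValidPref p) {s : S} (hs : s ∈ acceptables p) :
    p.idxOf (some s) = (acceptables p).idxOf s := by
  obtain ⟨r, hr⟩ := hv.eq_map_some_acceptables_append
  conv_lhs => rw [hr]
  rw [List.idxOf_append_of_mem (List.mem_map_of_mem hs)]
  simp [List.idxOf, List.findIdx_map, Function.comp_def]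

theorem length_acceptables_le_idxOf_some (hv : ValidPref p) {s : S} (hs : s ∉ acceptables p) :
    (acceptables p).length ≤ p.idxOf (some s) := by
  obtain ⟨r, hr⟩ := hv.eq_map_some_acceptables_append
  conv_rhs => rw [hr]
  rw [List.idxOf_append_of_notMem (by simpa using hs)]
  simp

theorem prefLt_some_none_iff (hv : ValidPref p) {s : S} :
    prefLt p (some s) none ↔ s ∈ acceptables p := by
  unfold prefLt
  rw [hv.idxOf_none]
  by_cases hs : s ∈ acceptables p
  · rw [hv.idxOf_some_of_mem hs]
    exact List.idxOf_lt_length_iff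
  · simpa [hs] using hv.length_acceptables_le_idxOf_some hs

theorem prefLt_some_some_iff (hv : ValidPref p) {s t : S} (ht : t ∈ acceptables p) :
    prefLt p (some s) (some t) ↔
      s ∈ acceptables p ∧ (acceptables p).idxOf s < (acceptables p).idxOf t := by
  unfold prefLt
  rw [hv.idxOf_some_of_mem ht]
  by_cases hs : s ∈ acceptables p
  · simp [hv.idxOf_some_of_mem hs, hs]
  · have := hv.length_acceptables_le_idxOf_some hs
    have := List.idxOf_lt_length_of_mem ht
    simp only [hs, false_and, iff_false, not_lt]
    omega

theorem not_prefLt_none_some (hv : ValidPref p) {s : S} (hs : s ∈ acceptables p) :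
    ¬ prefLt p none (some s) := by
  unfold prefLt
  rw [hv.idxOf_none, hv.idxOf_some_of_mem hs]
  exact (List.idxOf_lt_length_of_mem hs).le.not_gt

theorem truncate_eq_self (hv : ValidPref p) {k : ℕ} (hk : (acceptables p).length ≤ k) :
    truncate p k = p := by
  obtain ⟨r, hr⟩ := hv.eq_map_some_acceptables_append
  have hnd := hv.1
  unfold truncate
  rw [List.take_of_length_le hk]
  generalize acceptables p = A at hr
  subst hr
  rw [List.nodup_append, List.nodup_cons] at hnd
  obtain ⟨-, ⟨hnone, -⟩, hdisj⟩ := hnd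
  congr 2
  rw [List.filter_append, List.filter_eq_nil_iff.2 (by simp), List.nil_append,
    List.filter_cons_of_neg (by simp), List.filter_eq_self]
  intro x hx
  simp only [decide_eq_true_eq]
  exact ⟨fun h => hnone (h ▸ hx), fun h => hdisj x h x (List.mem_cons_of_mem _ hx) rfl⟩

theorem prefLt_of_prefLt_truncate (hv : ValidPref p) {k : ℕ} {s : S} {b : Option S}
    (hb : ∀ t ∈ b, t ∈ (acceptables p).take k)
    (h : prefLt (truncate p k) (some s) b) : prefLt p (some s) b := by
  have hvt := validPref_truncate hv k
  cases b with
  | none =>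
    rw [hvt.prefLt_some_none_iff, acceptables_truncate] at h
    exact hv.prefLt_some_none_iff.2 (List.mem_of_mem_take h)
  | some t =>
    have ht := hb t rfl
    rw [hvt.prefLt_some_some_iff (by rwa [acceptables_truncate]), acceptables_truncate,
      (List.take_prefix k _).idxOf_eq_of_mem ht] at h
    obtain ⟨hs, hlt⟩ := h
    rw [(List.take_prefix k _).idxOf_eq_of_mem hs] at hlt
    exact (hv.prefLt_some_some_iff (List.mem_of_mem_take ht)).2 ⟨List.mem_of_mem_take hs, hlt⟩

theorem not_prefLt_truncate_none (hv : ValidPref p) {k : ℕ} {b : Option S}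
    (hb : ∀ t ∈ b, t ∈ (acceptables p).take k) :
    ¬ prefLt (truncate p k) none b := by
  cases b with
  | none => exact not_prefLt_self _ _
  | some t =>
    refine (validPref_truncate hv k).not_prefLt_none_some ?_
    rw [acceptables_truncate]
    exact hb t rfl

end ValidPref

end Preferences

end SchoolChoice

namespace SchoolChoice

theorem IsStable.of_prefLt_imp {I S : Type*} [Fintype I] [DecidableEq I] [DecidableEq S]
    {P Q : I → List (Option S)} {prio : S → List I} {q : S → ℕ} {μ : I → Option S}
    (hμ : IsStable P prio q μ) (hIR : IndividuallyRational Q μ)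
    (himp : ∀ i s, prefLt (Q i) (some s) (μ i) → prefLt (P i) (some s) (μ i)) :
    IsStable Q prio q μ :=
  ⟨hIR, fun i ⟨s, hpref, hor⟩ => hμ.2 i ⟨s, himp i s hpref, hor⟩⟩

theorem IsMatching.eq_of_eq_some {I S : Type*} [Fintype I] [DecidableEq S] {q : S → ℕ}
    {μ : I → Option S} (hμ : IsMatching q μ) {s : S} (hq : q s ≤ 1) {i j : I}
    (hi : μ i = some s) (hj : μ j = some s) : i = j :=
  Finset.card_le_one.1 ((hμ s).trans hq) i (by simpa using hi) j (by simpa using hj)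

section DeferredAcceptance

variable {I S : Type*} [DecidableEq I] [DecidableEq S]
variable (R : I → List (Option S)) (prio : S → List I) (q : S → ℕ)

theorem daStep_of_mem_daHeld {σ : I → ℕ} {i : I} {s : S} (ht : daTarget R σ i = some s)
    (hheld : i ∈ daHeld R prio q σ s) : daStep R prio q σ i = σ i := by
  simp [daStep, ht, hheld]

theorem daStep_of_not_mem_daHeld {σ : I → ℕ} {i : I} {s : S} (ht : daTarget R σ i = some s)
    (hrej : i ∉ daHeld R prio q σ s) : daStep R prio q σ i = σ i + 1 := by
  simp [daStep, ht, hrej]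

theorem le_daStep (σ : I → ℕ) (i : I) : σ i ≤ daStep R prio q σ i := by
  unfold daStep
  split
  · exact le_rfl
  · split <;> omega

theorem daStep_le_succ (σ : I → ℕ) (i : I) : daStep R prio q σ i ≤ σ i + 1 := by
  unfold daStep
  split
  · omega
  · split <;> omega

theorem daStep_le_length {σ : I → ℕ} {i : I} (h : σ i ≤ (acceptables (R i)).length) :
    daStep R prio q σ i ≤ (acceptables (R i)).length := by
  unfold daStep
  split
  · exact h
  · rename_i s ht
    obtain ⟨hlt, -⟩ := List.getElem?_eq_some_iff.1 ht
    split <;> omega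

def daState (t : ℕ) : I → ℕ := (daStep R prio q)^[t] (fun _ => 0)

theorem daState_succ (t : ℕ) :
    daState R prio q (t + 1) = daStep R prio q (daState R prio q t) :=
  Function.iterate_succ_apply' _ _ _

theorem daState_le_length (t : ℕ) (i : I) :
    daState R prio q t i ≤ (acceptables (R i)).length := by
  induction t with
  | zero => simp [daState]
  | succ t ih => rw [daState_succ]; exact daStep_le_length R prio q ih

def Outranked (σ : I → ℕ) (s : S) (i : I) : Prop :=
  q s ≤ (((prio s).filter (fun j => daTarget R σ j = some s)).filter
    (fun j => prioLt (prio s) j i)).length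

variable {R prio q}

theorem outranked_of_not_mem_daHeld {σ : I → ℕ} {s : S} {i : I} (hvprio : ValidPrio (prio s))
    (ht : daTarget R σ i = some s) (hrej : i ∉ daHeld R prio q σ s) :
    Outranked R prio q σ s i := by
  set f := (prio s).filter (fun j => daTarget R σ j = some s)
  have hif : i ∈ f := List.mem_filter.2 ⟨hvprio.2 i, by simpa using ht⟩
  have hidrop : i ∈ f.drop (q s) := by
    rw [← List.take_append_drop (q s) f, List.mem_append] at hif
    exact hif.resolve_left hrej
  have hlenf : q s ≤ f.length := by
    by_contra h
    rw [List.drop_eq_nil_of_le (by omega)] at hidrop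
    simp at hidrop
  have hbeats : ∀ x ∈ f.take (q s), prioLt (prio s) x i := by
    intro x hx
    have hsub : [x, i].Sublist (prio s) :=
      ((List.singleton_sublist.2 hx).append (List.singleton_sublist.2 hidrop)).trans
        ((List.take_append_drop (q s) f).symm ▸ List.filter_sublist)
    exact List.rel_of_pairwise_cons (hvprio.1.pairwise_idxOf_lt.sublist hsub)
      (List.mem_singleton_self i)
  have hsub : f.take (q s) ⊆ f.filter (fun j => prioLt (prio s) j i) := fun x hx =>
    List.mem_filter.2 ⟨List.mem_of_mem_take hx, by simpa using hbeats x hx⟩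
  have hle := ((hvprio.1.filter _).sublist (List.take_sublist _ _)).subperm hsub |>.length_le
  rwa [List.length_take, min_eq_left hlenf] at hle

/-- The `q s` best applicants to `s` are held, so they still apply to `s` after the step, and
all of them outrank `i`. -/
theorem Outranked.step {σ : I → ℕ} {s : S} {i : I} (hvprio : ValidPrio (prio s))
    (h : Outranked R prio q σ s i) : Outranked R prio q (daStep R prio q σ) s i := by
  set f := (prio s).filter (fun j => daTarget R σ j = some s)
  have hmono : f.Pairwise (fun a b => decide (prioLt (prio s) b i) = true →
      decide (prioLt (prio s) a i) = true) :=
    (hvprio.1.pairwise_idxOf_lt.sublist List.filter_sublist).imp fun hab hb =>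
      decide_eq_true (lt_trans hab (of_decide_eq_true hb))
  have hall := List.forall_mem_take_of_le_length_filter hmono h
  have hlenf : q s ≤ f.length := h.trans (List.filter_sublist.length_le)
  have hsub : f.take (q s) ⊆ ((prio s).filter
      (fun j => daTarget R (daStep R prio q σ) j = some s)).filter
        (fun j => prioLt (prio s) j i) := by
    intro x hx
    have hxt : daTarget R σ x = some s := by
      simpa using (List.mem_filter.1 (List.mem_of_mem_take hx)).2
    have hxt' : daTarget R (daStep R prio q σ) x = some s := by
      rw [daTarget, daStep_of_mem_daHeld R prio q hxt hx]
      exact hxt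
    exact List.mem_filter.2 ⟨List.mem_filter.2 ⟨hvprio.2 x, by simpa using hxt'⟩, hall x hx⟩
  have hle := ((hvprio.1.filter _).sublist (List.take_sublist _ _)).subperm hsub |>.length_le
  rwa [List.length_take, min_eq_left hlenf] at hle

theorem Outranked.iterate {σ : I → ℕ} {s : S} {i : I} (hvprio : ValidPrio (prio s))
    (h : Outranked R prio q σ s i) (n : ℕ) :
    Outranked R prio q ((daStep R prio q)^[n] σ) s i := by
  induction n with
  | zero => exact h
  | succ n ih => rw [Function.iterate_succ_apply']; exact ih.step hvprio

end DeferredAcceptance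

end SchoolChoice

namespace SchoolChoice

theorem exists_eq_and_succ_eq_of_le_of_lt {g : ℕ → ℕ} (hstep : ∀ t, g (t + 1) ≤ g t + 1)
    {j N : ℕ} (h0 : g 0 ≤ j) (hN : j < g N) :
    ∃ t < N, g t = j ∧ g (t + 1) = j + 1 := by
  induction N with
  | zero => omega
  | succ N ih =>
    by_cases hj : j < g N
    · obtain ⟨t, ht, h⟩ := ih hj
      exact ⟨t, by omega, h⟩
    · have := hstep N
      exact ⟨N, N.lt_succ_self, by omega, by omega⟩

section GaleShapley

variable {I S : Type*} [Fintype I] [DecidableEq I] [DecidableEq S]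
variable (R : I → List (Option S)) (prio : S → List I) (q : S → ℕ)

theorem sum_lt_sum_daStep {σ : I → ℕ} (h : daStep R prio q σ ≠ σ) :
    ∑ i, σ i < ∑ i, daStep R prio q σ i := by
  obtain ⟨i, hi⟩ := Function.ne_iff.1 h
  exact Finset.sum_lt_sum (fun i _ => le_daStep R prio q σ i)
    ⟨i, Finset.mem_univ i, (le_daStep R prio q σ i).lt_of_ne' hi⟩

theorem le_sum_daState {t : ℕ}
    (h : ∀ t' < t, daStep R prio q (daState R prio q t') ≠ daState R prio q t') :
    t ≤ ∑ i, daState R prio q t i := by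
  induction t with
  | zero => exact Nat.zero_le _
  | succ t ih =>
    have := sum_lt_sum_daStep R prio q (h t t.lt_succ_self)
    rw [daState_succ]
    have := ih fun t' ht' => h t' (by omega)
    omega

variable [Fintype S]

def daFinal : I → ℕ := daState R prio q (Fintype.card I * Fintype.card S + 1)

variable {R prio q}

theorem sum_daState_le (hvR : ∀ i, ValidPref (R i)) (t : ℕ) :
    ∑ i, daState R prio q t i ≤ Fintype.card I * Fintype.card S :=
  calc ∑ i, daState R prio q t i ≤ ∑ _i : I, Fintype.card S :=
        Finset.sum_le_sum fun i _ =>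
          (daState_le_length R prio q t i).trans (hvR i).nodup_acceptables.length_le_card
    _ = Fintype.card I * Fintype.card S := by simp

/-- Deferred acceptance has stopped by round `|I| * |S| + 1`, since every round that changes the
state increases the total number of rejections, which is at most `|I| * |S|`. -/
theorem daStep_daFinal (hvR : ∀ i, ValidPref (R i)) :
    daStep R prio q (daFinal R prio q) = daFinal R prio q := by
  set N := Fintype.card I * Fintype.card S + 1
  by_contra hne
  have hnofix : ∀ t < N, daStep R prio q (daState R prio q t) ≠ daState R prio q t := by
    intro t _ hfix
    apply hne
    have heq : daFinal R prio q = daState R prio q t := by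
      change daState R prio q N = _
      rw [show N = (N - t) + t by omega, daState, Function.iterate_add_apply]
      exact Function.iterate_fixed hfix (N - t)
    rw [heq, hfix]
  have := le_sum_daState R prio q hnofix
  have := sum_daState_le (prio := prio) (q := q) hvR N
  omega

theorem mem_daHeld_daFinal (hvR : ∀ i, ValidPref (R i)) {i : I} {s : S}
    (h : daTarget R (daFinal R prio q) i = some s) :
    i ∈ daHeld R prio q (daFinal R prio q) s := by
  by_contra hrej
  have := congrFun (daStep_daFinal (prio := prio) (q := q) hvR) i
  rw [daStep_of_not_mem_daHeld R prio q h hrej] at this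
  omega

theorem gs_eq_some_iff (hvR : ∀ i, ValidPref (R i)) {i : I} {s : S} :
    GS R prio q i = some s ↔ daTarget R (daFinal R prio q) i = some s := by
  change (match daTarget R (daFinal R prio q) i with
    | none => none
    | some s => if i ∈ daHeld R prio q (daFinal R prio q) s then some s else none) = _ ↔ _
  cases ht : daTarget R (daFinal R prio q) i with
  | none => simp
  | some t => simp [mem_daHeld_daFinal hvR ht]

theorem length_filter_daFinal_le (hvR : ∀ i, ValidPref (R i)) {s : S}
    (hvprio : ValidPrio (prio s)) :
    ((prio s).filter (fun j => daTarget R (daFinal R prio q) j = some s)).length ≤ q s := by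
  set f := (prio s).filter (fun j => daTarget R (daFinal R prio q) j = some s)
  have hsub : f ⊆ f.take (q s) := fun j hj =>
    mem_daHeld_daFinal hvR (by simpa using (List.mem_filter.1 hj).2)
  exact ((hvprio.1.filter _).subperm hsub).length_le.trans (List.length_take_le _ _)

theorem card_filter_gs_eq (hvR : ∀ i, ValidPref (R i)) {s : S} (hvprio : ValidPrio (prio s)) :
    (Finset.univ.filter (fun j => GS R prio q j = some s)).card =
      ((prio s).filter (fun j => daTarget R (daFinal R prio q) j = some s)).length := by
  rw [← List.toFinset_card_of_nodup (hvprio.1.filter _)]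
  congr 1
  ext j
  simp [gs_eq_some_iff hvR, hvprio.2 j]

theorem isMatching_gs (hvR : ∀ i, ValidPref (R i)) (hvprio : ∀ s, ValidPrio (prio s)) :
    IsMatching q (GS R prio q) := fun s => by
  rw [card_filter_gs_eq hvR (hvprio s)]
  exact length_filter_daFinal_le hvR (hvprio s)

theorem gs_mem_acceptables (hvR : ∀ i, ValidPref (R i)) {i : I} {s : S}
    (h : GS R prio q i = some s) : s ∈ acceptables (R i) :=
  List.mem_of_getElem? ((gs_eq_some_iff hvR).1 h)

/-- `daFinal R prio q i` counts the schools that rejected `i`; a student who prefers `s` to her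
`GS` outcome is one of those rejected by `s`. -/
theorem exists_lt_daFinal_of_prefLt_gs (hvR : ∀ i, ValidPref (R i)) {i : I} {s : S}
    (h : prefLt (R i) (some s) (GS R prio q i)) :
    ∃ (j : ℕ) (hj : j < (acceptables (R i)).length),
      j < daFinal R prio q i ∧ (acceptables (R i))[j] = s := by
  cases hμ : GS R prio q i with
  | some t =>
    rw [hμ, (hvR i).prefLt_some_some_iff (gs_mem_acceptables hvR hμ)] at h
    obtain ⟨hlt, hget⟩ := List.getElem?_eq_some_iff.1 ((gs_eq_some_iff hvR).1 hμ)
    have hidx : (acceptables (R i)).idxOf t = daFinal R prio q i := by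
      rw [← hget, (hvR i).nodup_acceptables.idxOf_getElem]
    exact ⟨_, List.idxOf_lt_length_of_mem h.1, hidx ▸ h.2, List.getElem_idxOf _⟩
  | none =>
    rw [hμ, (hvR i).prefLt_some_none_iff] at h
    have hlen : (acceptables (R i)).length ≤ daFinal R prio q i := by
      by_contra hc
      obtain ⟨t, ht⟩ : ∃ t, daTarget R (daFinal R prio q) i = some t :=
        ⟨_, List.getElem?_eq_getElem (by omega)⟩
      simp [(gs_eq_some_iff hvR).2 ht] at hμ
    have := List.idxOf_lt_length_of_mem h
    exact ⟨_, this, by omega, List.getElem_idxOf _⟩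

theorem outranked_daFinal (hvprio : ∀ s, ValidPrio (prio s))
    {i : I} {j : ℕ} (hj : j < daFinal R prio q i) (hjlen : j < (acceptables (R i)).length) :
    Outranked R prio q (daFinal R prio q) (acceptables (R i))[j] i := by
  obtain ⟨t, htN, h1, h2⟩ :=
    exists_eq_and_succ_eq_of_le_of_lt (g := fun t => daState R prio q t i)
      (fun t => daState_succ R prio q t ▸ daStep_le_succ R prio q _ i) (Nat.zero_le j) hj
  set σ := daState R prio q t with hσ
  have htarget : daTarget R σ i = some (acceptables (R i))[j] := by
    rw [daTarget, h1]
    exact List.getElem?_eq_getElem hjlen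
  have hrej : i ∉ daHeld R prio q σ (acceptables (R i))[j] := fun hheld => by
    have := daStep_of_mem_daHeld R prio q htarget hheld
    rw [← daState_succ] at this
    omega
  have hfinal :
      daFinal R prio q = (daStep R prio q)^[Fintype.card I * Fintype.card S + 1 - t] σ := by
    rw [hσ, daFinal, daState, daState, ← Function.iterate_add_apply, Nat.sub_add_cancel htN.le]
  rw [hfinal]
  exact (outranked_of_not_mem_daHeld (hvprio _) htarget hrej).iterate (hvprio _) _

/-- `s` is then filled with students of higher priority than `i`. -/
theorem not_blocks_gs_of_outranked (hvR : ∀ i, ValidPref (R i)) {i : I} {s : S}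
    (hvprio : ValidPrio (prio s)) (h : Outranked R prio q (daFinal R prio q) s i) :
    ¬ Blocks R prio q (GS R prio q) i s := by
  set f := (prio s).filter (fun j => daTarget R (daFinal R prio q) j = some s)
  set g := f.filter (fun j => prioLt (prio s) j i)
  have hqg : q s ≤ g.length := h
  have hgf : g.length ≤ f.length := List.filter_sublist.length_le
  have hfq : f.length ≤ q s := length_filter_daFinal_le hvR hvprio
  have hg : g = f := List.filter_sublist.eq_of_length (le_antisymm hgf (hfq.trans hqg))
  rintro ⟨-, hor | ⟨j, hj, hlt⟩⟩
  · have : q s ≤ (Finset.univ.filter (fun j => GS R prio q j = some s)).card := by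
      rw [card_filter_gs_eq hvR hvprio]
      exact hqg.trans hgf
    omega
  · have hjg : j ∈ g := hg ▸ List.mem_filter.2 ⟨hvprio.2 j, by
      simpa using (gs_eq_some_iff hvR).1 hj⟩
    have := of_decide_eq_true (List.mem_filter.1 hjg).2
    unfold prioLt at this hlt
    omega

theorem isStable_gs (hvR : ∀ i, ValidPref (R i)) (hvprio : ∀ s, ValidPrio (prio s)) :
    IsStable R prio q (GS R prio q) := by
  refine ⟨fun i => ?_, fun i ⟨s, hblock⟩ => ?_⟩
  · cases hμ : GS R prio q i with
    | none => exact not_prefLt_self _ _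
    | some s => exact (hvR i).not_prefLt_none_some (gs_mem_acceptables hvR hμ)
  · obtain ⟨j, hjlen, hjfin, rfl⟩ := exists_lt_daFinal_of_prefLt_gs hvR hblock.1
    exact not_blocks_gs_of_outranked hvR (hvprio _)
      (outranked_daFinal hvprio hjfin hjlen) hblock

end GaleShapley

end SchoolChoice

namespace SchoolChoice

section Uniqueness

variable {I S : Type*} [Fintype I] [DecidableEq I] [DecidableEq S]
variable {R : I → List (Option S)} {prio : S → List I} {q : S → ℕ}

/-- If `i` preferred `μ i` to `ν i`, she would block `ν` at `μ i`: every student held there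
under `ν` outranks `i`, hence is held there under `μ` too, and `μ` also holds `i`. -/
theorem not_prefLt_of_forall_prioLt_eq (hvprio : ∀ s, ValidPrio (prio s)) {μ ν : I → Option S}
    (hμ : IsMatching q μ) (hν : IsStable R prio q ν) {i : I}
    (hagree : ∀ j s, prioLt (prio s) j i → μ j = ν j) : ¬ prefLt (R i) (μ i) (ν i) := by
  intro hlt
  cases hμi : μ i with
  | none => exact hν.1 i (hμi ▸ hlt)
  | some s =>
    rw [hμi] at hlt
    have hνi : ν i ≠ some s := fun h => lt_irrefl _ (h ▸ hlt)
    have hnb : ¬ Blocks R prio q ν i s := fun hb => hν.2 i ⟨s, hb⟩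
    simp only [Blocks, not_and, not_or, not_lt, not_exists] at hnb
    obtain ⟨hcap, hocc⟩ := hnb hlt
    have hsub : Finset.univ.filter (fun j => ν j = some s) ⊂
        Finset.univ.filter (fun j => μ j = some s) := by
      refine Finset.ssubset_iff_of_subset (fun j hj => ?_) |>.2 ⟨i, by simp [hμi], by simp [hνi]⟩
      simp only [Finset.mem_filter, Finset.mem_univ, true_and] at hj ⊢
      have hji : j ≠ i := by rintro rfl; exact hνi hj
      have hidx : (prio s).idxOf j ≠ (prio s).idxOf i :=
        fun h => hji ((List.idxOf_inj ((hvprio s).2 j)).1 h)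
      have := hocc j hj
      rw [hagree j s (by unfold prioLt at this ⊢; omega), hj]
    have := Finset.card_lt_card hsub
    have := hμ s
    omega

theorem eq_of_isStable (hvR : ∀ i, ValidPref (R i)) (hvprio : ∀ s, ValidPrio (prio s))
    (hcommon : ∀ s s' : S, prio s = prio s') {μ ν : I → Option S}
    (hμs : IsStable R prio q μ) (hμm : IsMatching q μ)
    (hνs : IsStable R prio q ν) (hνm : IsMatching q ν) : μ = ν := by
  rcases isEmpty_or_nonempty S with hS | ⟨⟨s₀⟩⟩
  · exact funext fun i => Subsingleton.elim _ _
  funext i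
  induction i using (measure ((prio s₀).idxOf ·)).wf.induction with
  | _ i ih =>
    have hagree : ∀ j s, prioLt (prio s) j i → μ j = ν j := fun j s hj =>
      ih j (by rwa [hcommon s s₀] at hj)
    by_contra hne
    have hidx : (R i).idxOf (μ i) ≠ (R i).idxOf (ν i) :=
      fun h => hne ((List.idxOf_inj ((hvR i).2 _)).1 h)
    rcases hidx.lt_or_gt with h | h
    · exact not_prefLt_of_forall_prioLt_eq hvprio hμm hνs hagree h
    · exact not_prefLt_of_forall_prioLt_eq hvprio hνm hμs (fun j s hj => (hagree j s hj).symm) h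

end Uniqueness

section Boston

variable {I S : Type*} [Fintype I] [DecidableEq I] [DecidableEq S]
variable {R : I → List (Option S)} {prio : S → List I} {q : S → ℕ}

theorem foldl_bostonRound_of_eq_some (l : List ℕ) {μ : I → Option S} {i : I} {s : S}
    (h : μ i = some s) : l.foldl (bostonRound R prio q) μ i = some s := by
  induction l generalizing μ with
  | nil => exact h
  | cons t l ih => exact ih (by simp [bostonRound, h])

theorem bostonRound_eq_some_cases {μ : I → Option S} {t : ℕ} {i : I} {s : S}
    (h : bostonRound R prio q μ t i = some s) :
    μ i = some s ∨ (acceptables (R i))[t]? = some s ∧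
      i ∈ ((prio s).filter
          (fun j => decide (μ j = none ∧ (acceptables (R j))[t]? = some s))).take
        (q s - (Finset.univ.filter (fun j => μ j = some s)).card) := by
  unfold bostonRound at h
  rcases hμ : μ i with _ | s'
  · rcases hg : (acceptables (R i))[t]? with _ | s'
    · simp [hμ, hg] at h
    · simp only [hμ, hg] at h
      split_ifs at h with hmem
      cases h
      exact .inr ⟨rfl, hmem⟩
  · simp only [hμ] at h
    exact .inl h

theorem IsMatching.bostonRound {μ : I → Option S} (hμ : IsMatching q μ) (t : ℕ) :
    IsMatching q (SchoolChoice.bostonRound R prio q μ t) := fun s => by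
  set held := Finset.univ.filter (fun j => μ j = some s)
  set admitted := ((prio s).filter
      (fun j => decide (μ j = none ∧ (acceptables (R j))[t]? = some s))).take (q s - held.card)
  have hsub : Finset.univ.filter (fun j => SchoolChoice.bostonRound R prio q μ t j = some s) ⊆
      held ∪ admitted.toFinset := fun j hj => by
    rcases bostonRound_eq_some_cases (Finset.mem_filter.1 hj).2 with h | ⟨-, h⟩
    · exact Finset.mem_union_left _ (by simp [held, h])
    · exact Finset.mem_union_right _ (List.mem_toFinset.2 h)
  have := Finset.card_le_card hsub
  have := Finset.card_union_le held admitted.toFinset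
  have := admitted.toFinset_card_le
  have : admitted.length ≤ q s - held.card := List.length_take_le _ _
  have : held.card ≤ q s := hμ s
  omega

variable [Fintype S]

theorem isMatching_boston : IsMatching q (Boston R prio q) := by
  suffices ∀ (l : List ℕ) (μ : I → Option S), IsMatching q μ →
      IsMatching q (l.foldl (bostonRound R prio q) μ) from
    this _ _ fun s => by simp
  intro l
  induction l with
  | nil => exact fun _ h => h
  | cons t l ih => exact fun μ h => ih _ (h.bostonRound t)

theorem mem_acceptables_of_boston_eq_some {i : I} {s : S} (h : Boston R prio q i = some s) :
    s ∈ acceptables (R i) := by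
  suffices ∀ (l : List ℕ) (μ : I → Option S), (∀ i s, μ i = some s → s ∈ acceptables (R i)) →
      ∀ i s, l.foldl (bostonRound R prio q) μ i = some s → s ∈ acceptables (R i) from
    this _ _ (fun _ _ h => by simp at h) i s h
  intro l
  induction l with
  | nil => exact fun _ h => h
  | cons t l ih =>
    refine fun μ hμ => ih _ fun j s' hj => ?_
    rcases bostonRound_eq_some_cases hj with h | ⟨h, -⟩
    · exact hμ j s' h
    · exact List.mem_of_getElem? h

/-- `i` is admitted to `s` in the first round. -/
theorem boston_eq_some_of_first_choice {i : I} {s : S} (hvprio : ValidPrio (prio s))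
    (hfirst : (acceptables (R i))[0]? = some s) (hq : 0 < q s)
    (htop : ∀ j, prioLt (prio s) j i → (acceptables (R j))[0]? ≠ some s) :
    Boston R prio q i = some s := by
  obtain ⟨n, hn⟩ := Nat.exists_eq_succ_of_ne_zero (Fintype.card_pos_iff.2 ⟨s⟩).ne'
  rw [Boston, hn, List.range_succ_eq_map, List.foldl_cons]
  refine foldl_bostonRound_of_eq_some _ ?_
  have hadmit : i ∈ ((prio s).filter (fun j => (acceptables (R j))[0]? = some s)).take (q s) :=
    List.mem_take_filter_of_forall_idxOf_lt (hvprio.2 i) (by simpa using hfirst)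
      (fun j _ hj => by simpa using htop j hj) hq
  simp [bostonRound, hfirst, hadmit]

end Boston

end SchoolChoice

namespace SchoolChoice

theorem isStable_gs_of_isStable_bostonk {I S : Type*} [Fintype I] [DecidableEq I] [Fintype S]
    [DecidableEq S] (k : ℕ) {M : Finset I} {P P' : I → List (Option S)} {prio : S → List I}
    {q : S → ℕ} (hvP : ∀ i, ValidPref (P i)) (hvprio : ∀ s, ValidPrio (prio s))
    (hcommon : ∀ s s' : S, prio s = prio s') (hsincere : ∀ i ∉ M, P' i = P i)
    (hstable : IsStable P prio q (Bostonk k P' prio q)) :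
    IsStable P prio q (GS (fun i => if i ∈ M then P i else truncate (P i) k) prio q) := by
  set Pk := fun i => if i ∈ M then P i else truncate (P i) k
  set ν := Bostonk k P' prio q
  have hvPk : ∀ i, ValidPref (Pk i) := fun i => by
    by_cases hi : i ∈ M
    · simpa [Pk, hi] using hvP i
    · simpa [Pk, hi] using validPref_truncate (hvP i) k
  have hlisted : ∀ i ∉ M, ∀ s ∈ ν i, s ∈ (acceptables (P i)).take k := fun i hi s hs => by
    have := mem_acceptables_of_boston_eq_some hs
    rwa [acceptables_truncate, hsincere i hi] at this
  have hνPk : IsStable Pk prio q ν := by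
    refine hstable.of_prefLt_imp (fun i => ?_) (fun i s => ?_) <;> by_cases hi : i ∈ M
    · simpa [Pk, hi] using hstable.1 i
    · simpa [Pk, hi] using (hvP i).not_prefLt_truncate_none (hlisted i hi)
    · simp [Pk, hi]
    · simpa [Pk, hi] using (hvP i).prefLt_of_prefLt_truncate (hlisted i hi)
  rwa [eq_of_isStable hvPk hvprio hcommon (isStable_gs hvPk hvprio) (isMatching_gs hvPk hvprio)
    hνPk isMatching_boston]

section Example

variable {I S : Type*} [DecidableEq I] [Fintype S] [DecidableEq S]

noncomputable def listPref (l : List S) : List (Option S) :=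
  l.map some ++ none :: ((Finset.univ.filter (· ∉ l)).toList.map some)

theorem acceptables_listPref (l : List S) : acceptables (listPref l) = l :=
  acceptables_map_some_append_none _ _

theorem validPref_listPref {l : List S} (hl : l.Nodup) : ValidPref (listPref l) := by
  refine ⟨?_, fun x => ?_⟩
  · refine List.Nodup.append (hl.map (Option.some_injective S)) ?_ ?_
    · exact List.nodup_cons.2 ⟨by simp, (Finset.nodup_toList _).map (Option.some_injective S)⟩
    · intro x hx hy
      simp only [List.mem_map, List.mem_cons, Finset.mem_toList, Finset.mem_filter] at hx hy
      obtain ⟨s, hs, rfl⟩ := hx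
      rcases hy with h | ⟨t, ⟨-, ht⟩, h⟩
      · exact Option.some_ne_none _ h
      · exact ht (Option.some_injective S h ▸ hs)
  · cases x with
    | none => simp [listPref]
    | some s => by_cases hs : s ∈ l <;> simp [listPref, hs]

noncomputable def examplePref (s₁ s₂ : S) (a b c i : I) : List (Option S) :=
  listPref (if i = a ∨ i = b then [s₁, s₂] else if i = c then [s₂, s₁] else [])

variable {s₁ s₂ : S} {a b c : I}

theorem acceptables_examplePref (i : I) :
    acceptables (examplePref s₁ s₂ a b c i) =
      if i = a ∨ i = b then [s₁, s₂] else if i = c then [s₂, s₁] else [] :=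
  acceptables_listPref _

theorem validPref_examplePref (hs : s₁ ≠ s₂) (i : I) : ValidPref (examplePref s₁ s₂ a b c i) :=
  validPref_listPref (by split_ifs <;> simp [hs, hs.symm])

theorem truncate_examplePref (hs : s₁ ≠ s₂) {k : ℕ} (hk : 2 ≤ k) (i : I) :
    truncate (examplePref s₁ s₂ a b c i) k = examplePref s₁ s₂ a b c i :=
  (validPref_examplePref hs i).truncate_eq_self (by rw [acceptables_examplePref]; split_ifs <;>
    simp <;> omega)

variable [Fintype I]

/-- `a` takes `s₁` and `c` takes `s₂` in the first round of the Boston mechanism, so `b` is left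
unassigned although she outranks `c` at `s₂`. -/
theorem not_isStable_boston_examplePref {L : List I} (hL : ValidPrio L) (hs : s₁ ≠ s₂)
    (hab : prioLt L a b) (hbc : prioLt L b c) :
    ¬ IsStable (examplePref s₁ s₂ a b c) (fun _ => L) (fun _ => 1)
      (Boston (examplePref s₁ s₂ a b c) (fun _ => L) (fun _ => 1)) := by
  have hab' : a ≠ b := by rintro rfl; exact lt_irrefl _ hab
  have hbc' : b ≠ c := by rintro rfl; exact lt_irrefl _ hbc
  have hac' : a ≠ c := by rintro rfl; exact lt_asymm hab hbc
  set ν := Boston (examplePref s₁ s₂ a b c) (fun _ => L) (fun _ => 1)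
  have hνa : ν a = some s₁ := boston_eq_some_of_first_choice hL
    (by simp [acceptables_examplePref]) one_pos fun j hj => by
      by_cases hja : j = a
      · exact absurd (hja ▸ hj) (lt_irrefl _)
      by_cases hjb : j = b
      · exact absurd (hjb ▸ hj) (lt_asymm hab)
      simp only [acceptables_examplePref, hja, hjb, or_self, if_false]
      split_ifs <;> simp [hs.symm]
  have hνc : ν c = some s₂ := boston_eq_some_of_first_choice hL
    (by simp [acceptables_examplePref, hac'.symm, hbc'.symm]) one_pos fun j hj => by
      by_cases hjc : j = c
      · exact absurd (hjc ▸ hj) (lt_irrefl _)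
      by_cases hjab : j = a ∨ j = b <;> simp [acceptables_examplePref, hjab, hjc, hs]
  have hν : IsMatching (fun _ => 1) ν := isMatching_boston
  have hνb : ν b = none := by
    rcases hνb : ν b with _ | s
    · rfl
    have hs' := mem_acceptables_of_boston_eq_some hνb
    simp only [acceptables_examplePref, or_true, if_true, List.mem_cons,
      List.not_mem_nil, or_false] at hs'
    rcases hs' with rfl | rfl
    · exact absurd (hν.eq_of_eq_some le_rfl hνb hνa) hab'.symm
    · exact absurd (hν.eq_of_eq_some le_rfl hνb hνc) hbc'
  refine fun hstable => hstable.2 b ⟨s₂, ?_, .inr ⟨c, hνc, hbc⟩⟩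
  rw [hνb, (validPref_examplePref hs b).prefLt_some_none_iff, acceptables_examplePref]
  simp

end Example

variable {I S : Type*} [Fintype I] [DecidableEq I] [Fintype S] [DecidableEq S]

/-- Proposition 2: for `k > 1`, more than `k` schools, common priority
and a partition of the students into sincere students and sophisticated students `M`, in
equilibrium `SD^k` is more fair by stability than `β^k`: whenever a Nash equilibrium of
`(β^k, P)` has a stable outcome, the unique Nash equilibrium outcome
`SD(P^k_N, P_M, ≻, q)` of `(SD^k, P)` is stable; moreover there exists such a problem
where the Nash equilibrium outcome of `(SD^k, P)` is stable but some Nash equilibrium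
outcome of `(β^k, P)` is not. -/
theorem sdk_more_fair_by_stability_in_equilibrium
    {I S : Type*} [Fintype I] [DecidableEq I] [Fintype S] [DecidableEq S]
    (hIS : Fintype.card S < Fintype.card I)
    (k : ℕ) (hk : 1 < k) (hkS : k < Fintype.card S) :
    (∀ (M : Finset I) (P : I → List (Option S)) (prio : S → List I) (q : S → ℕ),
        (∀ i, ValidPref (P i)) → (∀ s, ValidPrio (prio s)) →
        (∀ s s' : S, prio s = prio s') →
        (∃ P' : I → List (Option S),
            NashEq (fun R => Bostonk k R prio q) P M P' ∧
            IsStable P prio q (Bostonk k P' prio q)) →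
        IsStable P prio q
          (GS (fun i => if i ∈ M then P i else truncate (P i) k) prio q)) ∧
    (∃ (M : Finset I) (P : I → List (Option S)) (prio : S → List I) (q : S → ℕ),
        (∀ i, ValidPref (P i)) ∧ (∀ s, ValidPrio (prio s)) ∧
        (∀ s s' : S, prio s = prio s') ∧
        IsStable P prio q
          (GS (fun i => if i ∈ M then P i else truncate (P i) k) prio q) ∧
        ∃ P' : I → List (Option S),
          NashEq (fun R => Bostonk k R prio q) P M P' ∧
          ¬ IsStable P prio q (Bostonk k P' prio q)) := by
  refine ⟨fun M P prio q hvP hvprio hcommon ⟨P', hNash, hstable⟩ =>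
    isStable_gs_of_isStable_bostonk k hvP hvprio hcommon hNash.2.1 hstable, ?_⟩
  obtain ⟨s₁, s₂, hs⟩ := Fintype.exists_pair_of_one_lt_card (show 1 < Fintype.card S by omega)
  set L := (Finset.univ : Finset I).toList
  have hL : ValidPrio L := ⟨Finset.nodup_toList _, fun i => by simp [L]⟩
  have hlen : 2 < L.length := by simp only [L, Finset.length_toList, Finset.card_univ]; omega
  set P := examplePref s₁ s₂ L[0] L[1] L[2]
  have hvP : ∀ i, ValidPref (P i) := validPref_examplePref hs
  have hPk : (fun i => truncate (P i) k) = P := funext (truncate_examplePref hs hk)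
  have hrank : ∀ n (hn : n < L.length), L.idxOf L[n] = n := hL.1.idxOf_getElem
  refine ⟨∅, P, fun _ => L, fun _ => 1, hvP, fun _ => hL, fun _ _ => rfl, ?_, P,
    ⟨hvP, fun _ _ => rfl, by simp⟩, ?_⟩
  · simpa [hPk] using isStable_gs hvP fun _ => hL
  · rw [Bostonk, hPk]
    exact not_isStable_boston_examplePref hL hs (by simp [prioLt, hrank]) (by simp [prioLt, hrank])

end SchoolChoice
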